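/- The normalized squared error S(Q,y) = (y − μ_Q)²/σ_Q², viewed via parameters (μ_Q, σ_Q²) ∈ ℝ × (0, m], has expected score under a nondegenerate P with finite second moment equal to (σ_P² + (μ_P − μ_Q)²)/σ_Q², which attains its minimum σ_P²/m exactly at μ_Q = μ_P, σ_Q² = m; relative to unbounded variances (0,∞) the infimum 0 is not attained. -/

import Mathlib

/-!
The expected score is `(E (Y - m)²) / v`, and the bias–variance decomposition
`E (Y - m)² = Var Y + (E Y - m)²` reduces everything to the real function `(σ² + d²) / v`
with `d² ≥ 0`: on `v ∈ (0, mbd]` it is smallest exactly when `d = 0` and `v = mbd`, while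
`σ² / v → 0` as `v → ∞`.
-/

open MeasureTheory ProbabilityTheory Filter

lemma integral_sub_const_sq_eq_variance_add {Ω : Type*} [MeasurableSpace Ω] {μ : Measure Ω}
    [IsProbabilityMeasure μ] {X : Ω → ℝ} (hX : MemLp X 2 μ) (c : ℝ) :
    ∫ ω, (X ω - c) ^ 2 ∂μ = Var[X; μ] + (μ[X] - c) ^ 2 := by
  have hXc : MemLp (fun ω => X ω - c) 2 μ := hX.sub (memLp_const c)
  have hmean : ∫ ω, (X ω - c) ∂μ = μ[X] - c := by
    rw [integral_sub (hX.integrable one_le_two) (integrable_const c)]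
    simp
  rw [← variance_sub_const hX.aestronglyMeasurable c, variance_eq_sub hXc, hmean]
  simp only [Pi.pow_apply]
  ring

lemma div_le_add_div_of_le {s d v b : ℝ} (hs : 0 ≤ s) (hd : 0 ≤ d) (hv : 0 < v)
    (hvb : v ≤ b) : s / b ≤ (s + d) / v :=
  (div_le_div_of_nonneg_left hs hv hvb).trans
    (div_le_div_of_nonneg_right (le_add_of_nonneg_right hd) hv.le)

lemma eq_zero_and_eq_of_add_div_eq_div {s d v b : ℝ} (hs : 0 < s) (hd : 0 ≤ d) (hv : 0 < v)
    (hvb : v ≤ b) (h : (s + d) / v = s / b) : d = 0 ∧ v = b := by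
  rw [div_eq_div_iff hv.ne' (hv.trans_le hvb).ne'] at h
  have hd0 : d = 0 := by nlinarith
  refine ⟨hd0, ?_⟩
  rw [hd0, add_zero] at h
  exact (mul_left_cancel₀ hs.ne' h).symm

lemma exists_pos_div_lt (s : ℝ) {ε : ℝ} (hε : 0 < ε) : ∃ v : ℝ, 0 < v ∧ s / v < ε :=
  ((eventually_gt_atTop 0).and
    ((tendsto_const_nhds.div_atTop tendsto_id).eventually (gt_mem_nhds hε))).exists

theorem normalized_squared_error_bayes_general
    (P : Measure ℝ) (hP : IsProbabilityMeasure P)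
    (h2 : Integrable (fun y => y ^ 2) P)
    (μP σ2P : ℝ) (hμ : μP = ∫ y, y ∂P)
    (hσ2 : σ2P = ∫ y, (y - μP) ^ 2 ∂P) (hσ2pos : 0 < σ2P)
    (mbd : ℝ) :
    (∀ m v : ℝ, 0 < v →
        (∫ y, (y - m) ^ 2 ∂P) / v = (σ2P + (μP - m) ^ 2) / v) ∧
      (∀ m v : ℝ, 0 < v → v ≤ mbd →
        σ2P / mbd ≤ (σ2P + (μP - m) ^ 2) / v) ∧
      (∀ m v : ℝ, 0 < v → v ≤ mbd →
        (σ2P + (μP - m) ^ 2) / v = σ2P / mbd → m = μP ∧ v = mbd) ∧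
      (∀ m v : ℝ, 0 < v → 0 < (σ2P + (μP - m) ^ 2) / v) ∧
      (∀ ε : ℝ, 0 < ε → ∃ m v : ℝ, 0 < v ∧ (σ2P + (μP - m) ^ 2) / v < ε) := by
  have hid : MemLp id 2 P := (memLp_two_iff_integrable_sq aestronglyMeasurable_id).2 h2
  have hvar : Var[id; P] = σ2P := by
    rw [variance_eq_integral aemeasurable_id, hσ2, hμ]
    rfl
  have score (m : ℝ) : ∫ y, (y - m) ^ 2 ∂P = σ2P + (μP - m) ^ 2 := by
    rw [← hvar, hμ]
    exact integral_sub_const_sq_eq_variance_add hid m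
  refine ⟨fun m v _ => by rw [score m], fun m v hv hvb => ?_, fun m v hv hvb heq => ?_,
    fun m v hv => by positivity, fun ε hε => ?_⟩
  · exact div_le_add_div_of_le hσ2pos.le (sq_nonneg _) hv hvb
  · obtain ⟨hsq, rfl⟩ := eq_zero_and_eq_of_add_div_eq_div hσ2pos (sq_nonneg _) hv hvb heq
    exact ⟨(sub_eq_zero.1 (pow_eq_zero_iff two_ne_zero |>.1 hsq)).symm, rfl⟩
  · obtain ⟨v, hv, hlt⟩ := exists_pos_div_lt σ2P hε
    exact ⟨μP, v, hv, by simpa using hlt⟩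

/-- Example 8 (normalized squared error). For nondegenerate `P` with finite second
moment, mean `μP` and variance `σ2P > 0`, the expected score of the normalized
squared error with parameters `(m, v)` equals `(σ2P + (μP − m)²)/v`; over
`v ∈ (0, mbd]` it attains its minimum `σ2P/mbd` exactly at `m = μP`, `v = mbd`,
while over `v ∈ (0, ∞)` the infimum `0` is not attained. -/
theorem normalized_squared_error_bayes
    (P : Measure ℝ) (hP : IsProbabilityMeasure P)
    (h2 : Integrable (fun y => y ^ 2) P)
    (μP σ2P : ℝ) (hμ : μP = ∫ y, y ∂P)
    (hσ2 : σ2P = ∫ y, (y - μP) ^ 2 ∂P) (hσ2pos : 0 < σ2P)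
    (mbd : ℝ) (hmbd : 0 < mbd) :
    (∀ m v : ℝ, 0 < v →
        (∫ y, (y - m) ^ 2 ∂P) / v = (σ2P + (μP - m) ^ 2) / v) ∧
      (∀ m v : ℝ, 0 < v → v ≤ mbd →
        σ2P / mbd ≤ (σ2P + (μP - m) ^ 2) / v) ∧
      (∀ m v : ℝ, 0 < v → v ≤ mbd →
        (σ2P + (μP - m) ^ 2) / v = σ2P / mbd → m = μP ∧ v = mbd) ∧
      (∀ m v : ℝ, 0 < v → 0 < (σ2P + (μP - m) ^ 2) / v) ∧
      (∀ ε : ℝ, 0 < ε → ∃ m v : ℝ, 0 < v ∧ (σ2P + (μP - m) ^ 2) / v < ε) :=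
  normalized_squared_error_bayes_general P hP h2 μP σ2P hμ hσ2 hσ2pos mbd
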